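/- arXiv:2605.28233 — 3 statements merged into one kernel-verified Lean document; each statement's English description precedes it below -/
import Mathlib

section
/- For fixed real numbers h1, h2, positive weights a1, a2 and λ > 0, the infimum over (y1, y2) ∈ ℝ² of (h1 - y1)²/a1 + (h2 - y2)²/a2 + λ·𝟙{y1 ≠ y2} equals min(λ, (h1 - h2)²/(a1 + a2)) when h1 ≠ h2, and equals 0 when h1 = h2. -/
theorem stmt_3 (h1 h2 a1 a2 lam : ℝ) (ha1 : 0 < a1) (ha2 : 0 < a2) (hlam : 0 < lam) :
    IsGLB (Set.range (fun p : ℝ × ℝ =>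
        (h1 - p.1)^2 / a1 + (h2 - p.2)^2 / a2 + (if p.1 ≠ p.2 then lam else 0)))
      (if h1 ≠ h2 then min lam ((h1 - h2)^2 / (a1 + a2)) else 0) := by
  by_cases heq : h1 = h2
  · subst heq
    rw [if_neg (by simp)]
    constructor
    · rintro x ⟨p, rfl⟩
      have : (0:ℝ) ≤ if p.1 ≠ p.2 then lam else 0 := by split_ifs <;> [exact hlam.le; rfl]
      have h1' : (0:ℝ) ≤ (h1 - p.1)^2 / a1 := by positivity
      have h2' : (0:ℝ) ≤ (h1 - p.2)^2 / a2 := by positivity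
      simp only
      linarith
    · intro b hb
      have := hb ⟨(h1, h1), rfl⟩
      simpa using this
  · rw [if_pos heq]
    set M := (h1 - h2)^2 / (a1 + a2) with hMdef
    have hMpos : 0 < M := by
      have h0 : h1 - h2 ≠ 0 := sub_ne_zero.mpr heq
      positivity
    have hlb : ∀ p : ℝ × ℝ, min lam M ≤
        (h1 - p.1)^2 / a1 + (h2 - p.2)^2 / a2 + (if p.1 ≠ p.2 then lam else 0) := by
      intro p
      by_cases hp : p.1 = p.2
      · rw [if_neg (by simpa using hp)]
        have key : M ≤ (h1 - p.1)^2 / a1 + (h2 - p.2)^2 / a2 := by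
          rw [hp, hMdef, div_add_div _ _ ha1.ne' ha2.ne',
            div_le_div_iff₀ (by positivity) (by positivity)]
          nlinarith [sq_nonneg (a2*(h1 - p.2) + a1*(h2 - p.2)), mul_pos ha1 ha2]
        have := min_le_right lam M
        linarith
      · rw [if_pos hp]
        have h1' : (0:ℝ) ≤ (h1 - p.1)^2 / a1 := by positivity
        have h2' : (0:ℝ) ≤ (h2 - p.2)^2 / a2 := by positivity
        have := min_le_left lam M
        linarith
    by_cases hM : M ≤ lam
    · rw [min_eq_right hM]
      refine IsLeast.isGLB ⟨⟨((a2*h1 + a1*h2)/(a1+a2), (a2*h1 + a1*h2)/(a1+a2)), ?_⟩, ?_⟩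
      · simp only [ne_eq, not_true_eq_false, if_false, if_neg]
        rw [hMdef]
        have ha12 : a1 + a2 ≠ 0 := by positivity
        field_simp
        ring
      · rintro x ⟨p, rfl⟩
        have := hlb p
        rw [min_eq_right hM] at this
        exact this
    · push_neg at hM
      rw [min_eq_left hM.le]
      constructor
      · rintro x ⟨p, rfl⟩
        have := hlb p
        rw [min_eq_left hM.le] at this
        exact this
      · intro b hb
        by_contra hb'
        push_neg at hb'
        set δ := b - lam with hδ
        have hδpos : 0 < δ := by simp [hδ]; linarith
        set t := min (Real.sqrt (a2 * δ) / 2) (|h1 - h2| / 2) with ht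
        have hsq : 0 < Real.sqrt (a2 * δ) := Real.sqrt_pos.mpr (by positivity)
        have habs : 0 < |h1 - h2| := abs_pos.mpr (sub_ne_zero.mpr heq)
        have htpos : 0 < t := lt_min (by linarith) (by linarith)
        have htne : h1 ≠ h2 + t := by
          intro h
          have : t = h1 - h2 := by linarith
          have h1' : t ≤ |h1 - h2| / 2 := min_le_right _ _
          have : |h1 - h2| ≤ |h1 - h2| / 2 := by
            calc |h1 - h2| = |t| := by rw [this]
            _ = t := abs_of_pos htpos
            _ ≤ |h1 - h2| / 2 := h1'
          linarith
        have hval := hb ⟨(h1, h2 + t), rfl⟩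
        simp only [ne_eq] at hval
        rw [if_pos htne] at hval
        have ht2 : t^2 / a2 < δ := by
          have h1' : t ≤ Real.sqrt (a2 * δ) / 2 := min_le_left _ _
          have h2' : t^2 ≤ (Real.sqrt (a2 * δ) / 2)^2 :=
            pow_le_pow_left₀ htpos.le h1' 2
          have h3' : (Real.sqrt (a2 * δ))^2 = a2 * δ := Real.sq_sqrt (by positivity)
          rw [div_lt_iff₀ ha2]
          nlinarith
        have e : (h1 - h1)^2 / a1 + (h2 - (h2 + t))^2 / a2 + lam = t^2 / a2 + lam := by
          ring
        rw [e] at hval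
        linarith
end

section
/- For fixed real numbers h1, h2 with h1 ≠ h2, positive weights a1, a2 and λ > 0, if (h1 - h2)²/(a1 + a2) < λ, then the minimum of Φ(y1, y2) = (h1 - y1)²/a1 + (h2 - y2)²/a2 + λ·𝟙{y1 ≠ y2} over ℝ² is attained at y1 = y2 = (a2 h1 + a1 h2)/(a1 + a2); if (h1 - h2)²/(a1 + a2) > λ, the minimum is attained at (y1, y2) = (h1, h2). -/
theorem stmt_4 (h1 h2 a1 a2 lam : ℝ) (hne : h1 ≠ h2)
    (ha1 : 0 < a1) (ha2 : 0 < a2) (hlam : 0 < lam) :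
    ∀ Φ : ℝ → ℝ → ℝ,
      (Φ = fun y1 y2 => (h1 - y1)^2 / a1 + (h2 - y2)^2 / a2 + (if y1 ≠ y2 then lam else 0)) →
      ((h1 - h2)^2 / (a1 + a2) < lam →
        ∀ y1 y2 : ℝ, Φ ((a2 * h1 + a1 * h2) / (a1 + a2)) ((a2 * h1 + a1 * h2) / (a1 + a2)) ≤ Φ y1 y2) ∧
      ((h1 - h2)^2 / (a1 + a2) > lam →
        ∀ y1 y2 : ℝ, Φ h1 h2 ≤ Φ y1 y2) := by
  intro Φ hΦ
  subst hΦ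
  have ha12 : 0 < a1 + a2 := by linarith
  have key : ∀ y : ℝ, (h1 - h2)^2 / (a1 + a2) ≤ (h1 - y)^2 / a1 + (h2 - y)^2 / a2 := by
    intro y
    rw [div_add_div _ _ (ne_of_gt ha1) (ne_of_gt ha2), div_le_div_iff₀ ha12 (by positivity)]
    nlinarith [sq_nonneg ((a1 + a2) * y - (a2 * h1 + a1 * h2)), sq_nonneg (h1-h2)]
  have hval : (h1 - ((a2 * h1 + a1 * h2) / (a1 + a2)))^2 / a1
      + (h2 - ((a2 * h1 + a1 * h2) / (a1 + a2)))^2 / a2 = (h1 - h2)^2 / (a1 + a2) := by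
    field_simp
    ring
  constructor
  · intro hlt y1 y2
    simp only [if_neg (by simp : ¬((a2 * h1 + a1 * h2) / (a1 + a2) ≠ (a2 * h1 + a1 * h2) / (a1 + a2)))]
    rw [hval, add_zero]
    by_cases h : y1 = y2
    · subst h
      simp only [if_neg (by simp : ¬(y1 ≠ y1)), add_zero]
      exact key y1
    · rw [if_pos h]
      have h1n : 0 ≤ (h1 - y1)^2 / a1 := by positivity
      have h2n : 0 ≤ (h2 - y2)^2 / a2 := by positivity
      linarith
  · intro hgt y1 y2
    dsimp only
    have hΦ12 : (h1 - h1)^2 / a1 + (h2 - h2)^2 / a2 + (if h1 ≠ h2 then lam else 0) = lam := by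
      simp [hne]
    rw [hΦ12]
    by_cases h : y1 = y2
    · subst h
      simp only [if_neg (by simp : ¬(y1 ≠ y1)), add_zero]
      calc lam ≤ (h1 - h2)^2 / (a1 + a2) := le_of_lt hgt
        _ ≤ _ := key y1
    · rw [if_pos h]
      have h1n : 0 ≤ (h1 - y1)^2 / a1 := by positivity
      have h2n : 0 ≤ (h2 - y2)^2 / a2 := by positivity
      linarith
end

section
/- Let μ, ν be probability measures on ℝ and let f: ℝᵈ → ℝ be measurable with χ⁺ = m·ρ⁺ + χ̃ and χ⁻ = m·ρ⁻ + χ̃ as measures (where m ∈ (0, 1], ρ⁺, ρ⁻, and χ̃/(1-m) are probability measures up to normalization). Then for any cost c ≥ 0 with c(y, y) = 0, the OT cost satisfies OT_c(f♯χ⁺, f♯χ⁻) ≤ m · OT_c(f♯ρ⁺, f♯ρ⁻). -/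
open MeasureTheory Pointwise

theorem stmt_16 (d : ℕ) (f : (Fin d → ℝ) → ℝ) (hf : Measurable f)
    (χp χm ρp ρm tχ : Measure (Fin d → ℝ))
    [IsProbabilityMeasure χp] [IsProbabilityMeasure χm]
    [IsProbabilityMeasure ρp] [IsProbabilityMeasure ρm]
    (m : ℝ) (hm0 : 0 < m) (hm1 : m ≤ 1)
    (hdecp : χp = ENNReal.ofReal m • ρp + tχ)
    (hdecm : χm = ENNReal.ofReal m • ρm + tχ)
    (htχ : tχ Set.univ = ENNReal.ofReal (1 - m))
    (c : ℝ → ℝ → ℝ)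
    (hcmeas : Measurable (fun p : ℝ × ℝ => c p.1 p.2))
    (hc0 : ∀ y y' : ℝ, 0 ≤ c y y')
    (hcdiag : ∀ y : ℝ, c y y = 0) :
    sInf {r : ℝ | ∃ π : Measure (ℝ × ℝ), IsProbabilityMeasure π ∧
        π.map Prod.fst = χp.map f ∧ π.map Prod.snd = χm.map f ∧
        r = ∫ p : ℝ × ℝ, c p.1 p.2 ∂π} ≤
    m * sInf {r : ℝ | ∃ π : Measure (ℝ × ℝ), IsProbabilityMeasure π ∧
        π.map Prod.fst = ρp.map f ∧ π.map Prod.snd = ρm.map f ∧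
        r = ∫ p : ℝ × ℝ, c p.1 p.2 ∂π} := by
  have hm' : (0:ℝ) ≤ m := hm0.le
  set g : (Fin d → ℝ) → ℝ × ℝ := fun x => (f x, f x) with hgdef
  have hgmeas : Measurable g := hf.prodMk hf
  have hFmeas : Measurable fun p : ℝ × ℝ => ENNReal.ofReal (c p.1 p.2) :=
    hcmeas.ennreal_ofReal
  have hint : ∀ μ : Measure (ℝ × ℝ),
      ∫ p : ℝ × ℝ, c p.1 p.2 ∂μ = (∫⁻ p, ENNReal.ofReal (c p.1 p.2) ∂μ).toReal := by
    intro μ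
    exact integral_eq_lintegral_of_nonneg_ae
      (Filter.Eventually.of_forall fun p => hc0 p.1 p.2)
      hcmeas.aestronglyMeasurable
  haveI : IsProbabilityMeasure (ρp.map f) := Measure.isProbabilityMeasure_map hf.aemeasurable
  haveI : IsProbabilityMeasure (ρm.map f) := Measure.isProbabilityMeasure_map hf.aemeasurable
  set S1 : Set ℝ := {r : ℝ | ∃ π : Measure (ℝ × ℝ), IsProbabilityMeasure π ∧
        π.map Prod.fst = χp.map f ∧ π.map Prod.snd = χm.map f ∧
        r = ∫ p : ℝ × ℝ, c p.1 p.2 ∂π} with hS1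
  set S2 : Set ℝ := {r : ℝ | ∃ π : Measure (ℝ × ℝ), IsProbabilityMeasure π ∧
        π.map Prod.fst = ρp.map f ∧ π.map Prod.snd = ρm.map f ∧
        r = ∫ p : ℝ × ℝ, c p.1 p.2 ∂π} with hS2
  have hS2ne : S2.Nonempty := by
    refine ⟨∫ p : ℝ × ℝ, c p.1 p.2 ∂((ρp.map f).prod (ρm.map f)),
      (ρp.map f).prod (ρm.map f), inferInstance, ?_, ?_, rfl⟩
    · simp [Measure.map_fst_prod]
    · simp [Measure.map_snd_prod]
  have hbdd : BddBelow S1 := by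
    refine ⟨0, ?_⟩
    rintro r ⟨π, hπ, -, -, rfl⟩
    exact integral_nonneg fun p => hc0 p.1 p.2
  have hsubset : m • S2 ⊆ S1 := by
    rintro x ⟨r, ⟨π, hπ, hfst, hsnd, rfl⟩, rfl⟩
    refine ⟨ENNReal.ofReal m • π + tχ.map g, ?_, ?_, ?_, ?_⟩
    · constructor
      simp only [Measure.add_apply, Measure.smul_apply, smul_eq_mul,
        Measure.map_apply hgmeas MeasurableSet.univ, Set.preimage_univ, htχ,
        measure_univ, mul_one]
      rw [← ENNReal.ofReal_add hm' (by linarith)]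
      norm_num
    · rw [Measure.map_add _ _ measurable_fst, Measure.map_smul,
        Measure.map_map measurable_fst hgmeas, hdecp,
        Measure.map_add _ _ hf, Measure.map_smul, hfst]
      rfl
    · rw [Measure.map_add _ _ measurable_snd, Measure.map_smul,
        Measure.map_map measurable_snd hgmeas, hdecm,
        Measure.map_add _ _ hf, Measure.map_smul, hsnd]
      rfl
    · rw [hint, hint, lintegral_add_measure, lintegral_smul_measure,
        lintegral_map hFmeas hgmeas]
      simp only [hgdef, hcdiag, ENNReal.ofReal_zero, lintegral_zero, add_zero]
      rw [smul_eq_mul (a := ENNReal.ofReal m), ENNReal.toReal_mul, ENNReal.toReal_ofReal hm', smul_eq_mul]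
  calc sInf S1 ≤ sInf (m • S2) :=
        csInf_le_csInf hbdd (hS2ne.smul_set) hsubset
    _ = m * sInf S2 := by
        rw [Real.sInf_smul_of_nonneg hm']
        rfl
end
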